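/- arXiv:2211.03435 — 4 statements merged into one kernel-verified Lean document; each statement's English description precedes it below -/
import Mathlib

section
/- For all x > 0 and τ > 0, |K_{iτ}(x)| ≤ π √(τ / (x · sinh(πτ))). -/
open Real MeasureTheory

/-- Macdonald function with purely imaginary index. -/
noncomputable def Kit (τ x : ℝ) : ℝ :=
  ∫ t in Set.Ioi (0:ℝ), Real.exp (-x * Real.cosh t) * Real.cos (τ * t)

/-!
Contour shift. `2 K_{iτ}(x)` is the real part of `∫ exp (-x cosh t + iτt) dt` over `ℝ`. The
integrand is entire, and on the line `Im z = s` with `|s| < π/2` its modulus is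
`exp (-τs) exp (-x cos s cosh t)`, which is integrable together with the derivative, locally
uniformly in `s`; so the line of integration may be moved there. Comparing `cosh t ≥ 1 + t²/2`
with a Gaussian gives `2 |K_{iτ}(x)| ≤ exp (-τs) √(2π / (x cos s))`. Finally take `s = 0` when
`πτ ≤ 1`, and otherwise `s = π/2 - 1/(2τ)`, for which `exp (-2τs) = exp (1 - πτ)` absorbs the
growth of `sinh (πτ)` while Jordan's inequality gives `cos s ≥ 1/(πτ)`.
-/

open Set Filter

theorem integral_eq_two_mul_integral_Ioi_of_even {E : Type*} [NormedAddCommGroup E]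
    [NormedSpace ℝ E] {g : ℝ → E} (hg : Integrable g) (heven : ∀ t, g (-t) = g t) :
    ∫ t, g t = (2 : ℝ) • ∫ t in Ioi 0, g t := by
  have hIic : ∫ t in Iic 0, g t = ∫ t in Ioi 0, g t := by
    simpa [heven] using (integral_comp_neg_Ioi 0 g).symm
  rw [← intervalIntegral.integral_Iic_add_Ioi hg.integrableOn hg.integrableOn, hIic, two_smul]

theorem Complex.norm_sinh_le_cosh_re (z : ℂ) : ‖Complex.sinh z‖ ≤ Real.cosh z.re := by
  rw [Complex.sinh, Real.cosh_eq, norm_div, Complex.norm_ofNat]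
  gcongr
  refine (norm_sub_le _ _).trans_eq ?_
  rw [Complex.norm_exp, Complex.norm_exp, Complex.neg_re]

theorem integral_add_mul_I_eq_of_dominated {E : Type*} [NormedAddCommGroup E] [NormedSpace ℂ E]
    [CompleteSpace E] {f f' : ℂ → E} (hf : ∀ z, HasDerivAt f (f' z) z) {a b : ℝ}
    (hint : ∀ u ∈ Ioo a b, Integrable fun t : ℝ => f (t + u * Complex.I))
    {bound : ℝ → ℝ} (hbound : Integrable bound)
    (hf'_le : ∀ u ∈ Ioo a b, ∀ t : ℝ, ‖f' (t + u * Complex.I)‖ ≤ bound t)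
    {u v : ℝ} (hu : u ∈ Ioo a b) (hv : v ∈ Ioo a b) :
    ∫ t : ℝ, f (t + u * Complex.I) = ∫ t : ℝ, f (t + v * Complex.I) := by
  have hf'_eq : f' = deriv f := funext fun z => (hf z).deriv.symm
  have hf'c : Continuous f' :=
    hf'_eq ▸ (Differentiable.contDiff fun z => (hf z).differentiableAt).continuous_deriv le_rfl
  have hfc : Continuous f := continuous_iff_continuousAt.2 fun z => (hf z).continuousAt
  have hline : ∀ t u : ℝ,
      HasDerivAt (fun t : ℝ => f (t + u * Complex.I)) (f' (t + u * Complex.I)) t := by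
    intro t u
    have hz : HasDerivAt (fun t : ℝ => (t : ℂ) + u * Complex.I) 1 t :=
      (hasDerivAt_id (t : ℂ)).comp_ofReal.add_const _
    simpa [Function.comp_def] using (hf _).scomp t hz
  have hvert : ∀ t u : ℝ,
      HasDerivAt (fun u : ℝ => f (t + u * Complex.I)) (Complex.I • f' (t + u * Complex.I)) u := by
    intro t u
    have hz : HasDerivAt (fun u : ℝ => (t : ℂ) + u * Complex.I) Complex.I u := by
      simpa using ((hasDerivAt_id (u : ℂ)).comp_ofReal.mul_const Complex.I).const_add (t : ℂ)
    exact (hf _).scomp u hz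
  have hderiv : ∀ σ ∈ Ioo a b, HasDerivAt (fun σ : ℝ => ∫ t : ℝ, f (t + σ * Complex.I)) 0 σ := by
    intro σ hσ
    have hmeas : ∀ u : ℝ, AEStronglyMeasurable (fun t : ℝ => f' (t + u * Complex.I)) := fun u =>
      (hf'c.comp (by fun_prop)).aestronglyMeasurable
    obtain ⟨-, h⟩ := hasDerivAt_integral_of_dominated_loc_of_deriv_le
      (F := fun (u t : ℝ) => f (t + u * Complex.I))
      (F' := fun u t => Complex.I • f' (t + u * Complex.I)) (Ioo_mem_nhds hσ.1 hσ.2)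
      (Eventually.of_forall fun u => (hfc.comp (by fun_prop)).aestronglyMeasurable) (hint σ hσ)
      ((hmeas σ).const_smul _)
      (ae_of_all _ fun t u hu => by simpa [norm_smul] using hf'_le u hu t) hbound
      (ae_of_all _ fun t u _ => hvert t u)
    have hzero : ∫ t : ℝ, f' (t + σ * Complex.I) = 0 :=
      integral_eq_zero_of_hasDerivAt_of_integrable (fun t => hline t σ)
        (hbound.mono' (hmeas σ) (ae_of_all _ (hf'_le σ hσ))) (hint σ hσ)
    simpa [integral_smul, hzero] using h
  exact isOpen_Ioo.is_const_of_deriv_eq_zero isPreconnected_Ioo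
    (fun σ hσ => (hderiv σ hσ).differentiableAt.differentiableWithinAt)
    (fun σ hσ => (hderiv σ hσ).deriv) hu hv

theorem one_add_sq_div_two_le_cosh (t : ℝ) : 1 + t ^ 2 / 2 ≤ Real.cosh t := by
  have h := sum_le_hasSum (Finset.range 2)
    (fun n _ => div_nonneg ((even_two_mul n).pow_nonneg t) (by positivity)) (Real.hasSum_cosh t)
  norm_num [Finset.sum_range_succ] at h
  linarith

theorem exp_neg_mul_cosh_le {b : ℝ} (hb : 0 ≤ b) (t : ℝ) :
    Real.exp (-b * Real.cosh t) ≤ Real.exp (-(b / 2) * t ^ 2) :=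
  Real.exp_le_exp.2 (by nlinarith [one_add_sq_div_two_le_cosh t])

theorem integrable_exp_neg_mul_cosh {b : ℝ} (hb : 0 < b) :
    Integrable fun t : ℝ => Real.exp (-b * Real.cosh t) :=
  (integrable_exp_neg_mul_sq (half_pos hb)).mono' (Continuous.aestronglyMeasurable (by fun_prop))
    (ae_of_all _ fun t => by
      simpa [abs_of_pos (Real.exp_pos _)] using exp_neg_mul_cosh_le hb.le t)

theorem integral_exp_neg_mul_cosh_le {b : ℝ} (hb : 0 < b) :
    ∫ t : ℝ, Real.exp (-b * Real.cosh t) ≤ √(2 * π / b) := by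
  calc ∫ t : ℝ, Real.exp (-b * Real.cosh t) ≤ ∫ t : ℝ, Real.exp (-(b / 2) * t ^ 2) :=
        integral_mono (integrable_exp_neg_mul_cosh hb) (integrable_exp_neg_mul_sq (half_pos hb))
          (exp_neg_mul_cosh_le hb.le)
    _ = √(2 * π / b) := by rw [integral_gaussian]; congr 1; field_simp

theorem mul_exp_neg_mul_le {c : ℝ} (hc : 0 < c) (y : ℝ) :
    y * Real.exp (-c * y) ≤ 2 / c * Real.exp (-(c / 2) * y) := by
  have hy : y ≤ 2 / c * Real.exp (c / 2 * y) := by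
    rw [div_mul_eq_mul_div, le_div_iff₀ hc]
    nlinarith [Real.add_one_le_exp (c / 2 * y)]
  calc y * Real.exp (-c * y) ≤ 2 / c * Real.exp (c / 2 * y) * Real.exp (-c * y) := by gcongr
    _ = 2 / c * Real.exp (-(c / 2) * y) := by rw [mul_assoc, ← Real.exp_add]; ring_nf

theorem integrable_cosh_mul_exp_neg_mul_cosh {b : ℝ} (hb : 0 < b) :
    Integrable fun t : ℝ => Real.cosh t * Real.exp (-b * Real.cosh t) :=
  ((integrable_exp_neg_mul_cosh (half_pos hb)).const_mul (2 / b)).mono'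
    (Continuous.aestronglyMeasurable (by fun_prop))
    (ae_of_all _ fun t => by
      rw [Real.norm_of_nonneg (by positivity)]
      exact mul_exp_neg_mul_le hb _)

noncomputable def macdonaldKernel (x τ : ℝ) (z : ℂ) : ℂ :=
  Complex.exp (-x * Complex.cosh z + τ * Complex.I * z)

section macdonaldKernel

variable {x τ : ℝ}

theorem hasDerivAt_macdonaldKernel (z : ℂ) :
    HasDerivAt (macdonaldKernel x τ)
      ((-x * Complex.sinh z + τ * Complex.I) * macdonaldKernel x τ z) z := by
  have h : HasDerivAt (fun w => -x * Complex.cosh w + τ * Complex.I * w)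
      (-x * Complex.sinh z + τ * Complex.I) z := by
    simpa using ((Complex.hasDerivAt_cosh z).const_mul (-(x : ℂ))).fun_add
      ((hasDerivAt_id z).const_mul ((τ : ℂ) * Complex.I))
  rw [mul_comm]
  exact h.cexp

theorem norm_macdonaldKernel (t s : ℝ) :
    ‖macdonaldKernel x τ (t + s * Complex.I)‖
      = Real.exp (-τ * s) * Real.exp (-(x * Real.cos s) * Real.cosh t) := by
  rw [macdonaldKernel, Complex.norm_exp, ← Real.exp_add, Complex.cosh_add, Complex.cosh_mul_I,
    Complex.sinh_mul_I, ← Complex.ofReal_cosh, ← Complex.ofReal_sinh, ← Complex.ofReal_cos,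
    ← Complex.ofReal_sin]
  simp only [Complex.add_re, Complex.mul_re, Complex.mul_im, Complex.add_im, Complex.neg_re,
    Complex.neg_im, Complex.ofReal_re, Complex.ofReal_im, Complex.I_re, Complex.I_im]
  ring_nf

theorem integrable_macdonaldKernel (hx : 0 < x) {s : ℝ} (hs : 0 < Real.cos s) :
    Integrable fun t : ℝ => macdonaldKernel x τ (t + s * Complex.I) :=
  ((integrable_exp_neg_mul_cosh (mul_pos hx hs)).const_mul _).mono'
    (Continuous.aestronglyMeasurable (by unfold macdonaldKernel; fun_prop))
    (ae_of_all _ fun t => (norm_macdonaldKernel t s).le)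

theorem norm_deriv_macdonaldKernel_le (hx : 0 ≤ x) (t s : ℝ) :
    ‖(-x * Complex.sinh (t + s * Complex.I) + τ * Complex.I)
        * macdonaldKernel x τ (t + s * Complex.I)‖
      ≤ (x + |τ|) * Real.exp (-τ * s)
        * (Real.cosh t * Real.exp (-(x * Real.cos s) * Real.cosh t)) := by
  have hsinh : ‖Complex.sinh (t + s * Complex.I)‖ ≤ Real.cosh t := by
    simpa using Complex.norm_sinh_le_cosh_re (t + s * Complex.I)
  have hfactor : ‖-x * Complex.sinh (t + s * Complex.I) + τ * Complex.I‖
      ≤ (x + |τ|) * Real.cosh t := by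
    calc _ ≤ x * Real.cosh t + |τ| := by
          refine (norm_add_le _ _).trans ?_
          simp only [norm_mul, norm_neg, Complex.norm_real, Real.norm_eq_abs, abs_of_nonneg hx,
            Complex.norm_I, mul_one]
          gcongr
      _ ≤ (x + |τ|) * Real.cosh t := by nlinarith [Real.one_le_cosh t, abs_nonneg τ]
  rw [norm_mul, norm_macdonaldKernel]
  calc _ ≤ (x + |τ|) * Real.cosh t
        * (Real.exp (-τ * s) * Real.exp (-(x * Real.cos s) * Real.cosh t)) := by gcongr
    _ = _ := by ring

theorem integral_macdonaldKernel_add_mul_I (hx : 0 < x) {s : ℝ} (hs : |s| < π / 2) :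
    ∫ t : ℝ, macdonaldKernel x τ (t + s * Complex.I) = ∫ t : ℝ, macdonaldKernel x τ t := by
  obtain ⟨r, hsr, hrπ⟩ := exists_between hs
  have hcos : ∀ u ∈ Ioo (-r) r, Real.cos r ≤ Real.cos u := by
    intro u hu
    rw [← Real.cos_abs u]
    exact Real.cos_le_cos_of_nonneg_of_le_pi (abs_nonneg u) (by linarith [Real.pi_pos])
      (abs_lt.2 hu).le
  have hcr : 0 < Real.cos r := Real.cos_pos_of_mem_Ioo ⟨by linarith [abs_nonneg s], hrπ⟩
  have hbound := (integrable_cosh_mul_exp_neg_mul_cosh (mul_pos hx hcr)).const_mul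
    ((x + |τ|) * Real.exp (|τ| * r))
  have hdom : ∀ u ∈ Ioo (-r) r, ∀ t : ℝ,
      ‖(-x * Complex.sinh (t + u * Complex.I) + τ * Complex.I)
          * macdonaldKernel x τ (t + u * Complex.I)‖
        ≤ (x + |τ|) * Real.exp (|τ| * r)
          * (Real.cosh t * Real.exp (-(x * Real.cos r) * Real.cosh t)) := by
    intro u hu t
    have hcosu := hcos u hu
    have hτu : -τ * u ≤ |τ| * r := by
      rw [neg_mul]
      refine (neg_le_abs _).trans ?_
      rw [abs_mul]
      gcongr
      exact (abs_lt.2 hu).le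
    refine (norm_deriv_macdonaldKernel_le hx.le t u).trans ?_
    gcongr
  have hs' : s ∈ Ioo (-r) r := abs_lt.1 hsr
  have h0 : (0 : ℝ) ∈ Ioo (-r) r := ⟨by linarith [abs_nonneg s], by linarith [abs_nonneg s]⟩
  simpa using integral_add_mul_I_eq_of_dominated hasDerivAt_macdonaldKernel
    (fun u hu => integrable_macdonaldKernel hx (hcr.trans_le (hcos u hu))) hbound hdom hs' h0

theorem re_macdonaldKernel_ofReal (t : ℝ) :
    (macdonaldKernel x τ t).re = Real.exp (-x * Real.cosh t) * Real.cos (τ * t) := by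
  rw [macdonaldKernel, ← Complex.ofReal_cosh, Complex.exp_re]
  simp

theorem two_mul_Kit_eq_re_integral_macdonaldKernel (hx : 0 < x) :
    2 * Kit τ x = (∫ t : ℝ, macdonaldKernel x τ t).re := by
  have hk : Integrable fun t : ℝ => macdonaldKernel x τ t := by
    simpa using integrable_macdonaldKernel hx (s := 0) (by simp)
  rw [← RCLike.re_to_complex, ← integral_re hk]
  simp only [RCLike.re_to_complex, re_macdonaldKernel_ofReal]
  rw [integral_eq_two_mul_integral_Ioi_of_even (by simpa [re_macdonaldKernel_ofReal] using hk.re)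
    (fun t => by simp [Real.cosh_neg, Real.cos_neg]), Kit, smul_eq_mul]

theorem two_mul_abs_Kit_le (hx : 0 < x) {s : ℝ} (hs : |s| < π / 2) :
    2 * |Kit τ x| ≤ Real.exp (-τ * s) * √(2 * π / (x * Real.cos s)) := by
  have hcos : 0 < Real.cos s := Real.cos_pos_of_mem_Ioo (abs_lt.1 hs)
  calc 2 * |Kit τ x| = |(∫ t : ℝ, macdonaldKernel x τ t).re| := by
        rw [← two_mul_Kit_eq_re_integral_macdonaldKernel hx, abs_mul, abs_two]
    _ ≤ ‖∫ t : ℝ, macdonaldKernel x τ (t + s * Complex.I)‖ := by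
        rw [integral_macdonaldKernel_add_mul_I hx hs]
        exact Complex.abs_re_le_norm _
    _ ≤ ∫ t : ℝ, ‖macdonaldKernel x τ (t + s * Complex.I)‖ := norm_integral_le_integral_norm _
    _ = Real.exp (-τ * s) * ∫ t : ℝ, Real.exp (-(x * Real.cos s) * Real.cosh t) := by
        simp only [norm_macdonaldKernel, integral_const_mul]
    _ ≤ Real.exp (-τ * s) * √(2 * π / (x * Real.cos s)) := by
        gcongr
        exact integral_exp_neg_mul_cosh_le (mul_pos hx hcos)

end macdonaldKernel

theorem sinh_le_two_mul {v : ℝ} (h0 : 0 ≤ v) (h1 : v ≤ 1) : Real.sinh v ≤ 2 * v := by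
  have hexp := (abs_le.1 (Real.abs_exp_sub_one_sub_id_le (abs_le.2 ⟨by linarith, h1⟩))).2
  have hexp_neg := Real.add_one_le_exp (-v)
  rw [Real.sinh_eq]
  nlinarith

theorem exists_exp_mul_sinh_le_cos {τ : ℝ} (hτ : 0 < τ) :
    ∃ s, |s| < π / 2 ∧ Real.exp (-2 * τ * s) * Real.sinh (π * τ) ≤ 2 * π * τ * Real.cos s := by
  have hπτ : 0 < π * τ := mul_pos Real.pi_pos hτ
  rcases le_or_gt (π * τ) 1 with hsmall | hlarge
  · refine ⟨0, by simp [Real.pi_pos], ?_⟩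
    simpa [mul_assoc] using sinh_le_two_mul hπτ.le hsmall
  · have hδ : 0 < 1 / (2 * τ) := by positivity
    have hδπ : 1 / (2 * τ) < π / 2 := by
      rw [div_lt_div_iff₀ (by positivity) two_pos]; linarith
    refine ⟨π / 2 - 1 / (2 * τ), abs_lt.2 ⟨by linarith, by linarith⟩, ?_⟩
    have hcos : 1 ≤ π * τ * Real.cos (π / 2 - 1 / (2 * τ)) := by
      rw [Real.cos_pi_div_two_sub]
      have hjordan := Real.mul_le_sin hδ.le hδπ.le
      calc (1 : ℝ) = π * τ * (2 / π * (1 / (2 * τ))) := by field_simp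
        _ ≤ _ := by gcongr
    have hexp : Real.exp (-2 * τ * (π / 2 - 1 / (2 * τ))) * Real.exp (π * τ) = Real.exp 1 := by
      rw [← Real.exp_add]; congr 1; field_simp; ring
    have hsinh : Real.sinh (π * τ) ≤ Real.exp (π * τ) / 2 := by
      rw [Real.sinh_eq]; linarith [Real.exp_pos (-(π * τ))]
    calc _ ≤ Real.exp (-2 * τ * (π / 2 - 1 / (2 * τ))) * (Real.exp (π * τ) / 2) := by gcongr
      _ ≤ 2 := by linarith [Real.exp_one_lt_d9]
      _ ≤ _ := by linarith

theorem stmt2 (x τ : ℝ) (hx : 0 < x) (hτ : 0 < τ) :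
    |Kit τ x| ≤ Real.pi * Real.sqrt (τ / (x * Real.sinh (Real.pi * τ))) := by
  obtain ⟨s, hs, hshift⟩ := exists_exp_mul_sinh_le_cos hτ
  have hcos : 0 < Real.cos s := Real.cos_pos_of_mem_Ioo (abs_lt.1 hs)
  have hsinh : 0 < Real.sinh (π * τ) := Real.sinh_pos_iff.2 (mul_pos Real.pi_pos hτ)
  have hsq : Kit τ x ^ 2 ≤ π ^ 2 * (τ / (x * Real.sinh (π * τ))) :=
    calc Kit τ x ^ 2 = (2 * |Kit τ x|) ^ 2 / 4 := by rw [mul_pow, sq_abs]; ring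
      _ ≤ (Real.exp (-τ * s) * √(2 * π / (x * Real.cos s))) ^ 2 / 4 := by
          gcongr ?_ ^ 2 / 4
          exact two_mul_abs_Kit_le hx hs
      _ = π * Real.exp (-2 * τ * s) / (2 * x * Real.cos s) := by
          rw [mul_pow, Real.sq_sqrt (by positivity), sq, ← Real.exp_add]
          field_simp
          ring_nf
      _ ≤ π ^ 2 * (τ / (x * Real.sinh (π * τ))) := by
          rw [mul_div_assoc', div_le_div_iff₀ (by positivity) (by positivity)]
          nlinarith [mul_le_mul_of_nonneg_left hshift (by positivity : 0 ≤ π * x)]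
  calc |Kit τ x| ≤ √(π ^ 2 * (τ / (x * Real.sinh (π * τ)))) := Real.abs_le_sqrt hsq
    _ = π * √(τ / (x * Real.sinh (π * τ))) := by
        rw [Real.sqrt_mul (sq_nonneg _), Real.sqrt_sq Real.pi_pos.le]
end

section
/- For all x > 0 and τ > 0, K_{iτ}(x)² = 2 ∫_1^∞ K_{2iτ}(2xy) (y²-1)^{-1/2} dy. -/
open Real MeasureTheory

/-!
By evenness, `2 K_{iτ}(x) = ∫_ℝ e^{-x cosh t} cos (τ t) dt`, so `4 K_{iτ}(x)²` is an integral over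
`ℝ²`. In the coordinates `s = u + v`, `t = u - v` (Jacobian `2`) one has
`cosh s + cosh t = 2 cosh u cosh v` and `2 cos (τ s) cos (τ t) = cos (2τ u) + cos (2τ v)`; the two
cosine terms contribute equally by the symmetry `u ↔ v`, and integrating out `v` leaves
`K_{2iτ}(2x cosh u)`. The substitution `y = cosh u` then gives the claim.
-/

open Set

lemma sq_div_four_le_cosh (t : ℝ) : t ^ 2 / 4 ≤ cosh t := by
  have := quadratic_le_exp_of_nonneg (abs_nonneg t)
  rw [sq_abs] at this
  rw [← cosh_abs, cosh_eq]
  linarith [exp_pos (-|t|), abs_nonneg t]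

lemma integrable_exp_neg_mul_cosh_s7 {c : ℝ} (hc : 0 < c) :
    Integrable fun t : ℝ => exp (-c * cosh t) := by
  refine (integrable_exp_neg_mul_sq (by positivity : 0 < c / 4)).mono' (by fun_prop)
    (ae_of_all _ fun t => ?_)
  rw [norm_of_nonneg (exp_pos _).le, exp_le_exp]
  nlinarith [sq_div_four_le_cosh t]

lemma integrable_exp_neg_mul_cosh_mul_cosh {c : ℝ} (hc : 0 < c) :
    Integrable fun p : ℝ × ℝ => exp (-c * (cosh p.1 * cosh p.2)) := by
  have hprod := (integrable_exp_neg_mul_cosh_s7 (half_pos hc)).mul_prod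
    (integrable_exp_neg_mul_cosh_s7 (half_pos hc))
  rw [← Measure.volume_eq_prod] at hprod
  refine hprod.mono' (by fun_prop) (ae_of_all _ fun p => ?_)
  rw [norm_of_nonneg (exp_pos _).le, ← exp_add, exp_le_exp]
  have h1 := one_le_cosh p.1
  have h2 := one_le_cosh p.2
  -- `(cosh u - 1) (cosh v - 1) ≥ 0` gives `2 cosh u cosh v ≥ cosh u + cosh v`
  nlinarith [mul_nonneg (sub_nonneg.2 h1) (sub_nonneg.2 h2)]

lemma two_mul_Kit (τ x : ℝ) : 2 * Kit τ x = ∫ t, exp (-x * cosh t) * cos (τ * t) := by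
  rw [Kit, ← integral_comp_abs (f := fun t => exp (-x * cosh t) * cos (τ * t))]
  refine integral_congr_ae (ae_of_all _ fun t => ?_)
  rcases abs_choice t with h | h <;> simp only [h, cosh_neg, mul_neg, cos_neg]

lemma integral_comp_add_sub {E : Type*} [NormedAddCommGroup E] [NormedSpace ℝ E]
    (φ : ℝ × ℝ → E) : ∫ p : ℝ × ℝ, φ (p.1 + p.2, p.1 - p.2) = (1 / 2 : ℝ) • ∫ p, φ p := by
  set L : ℝ × ℝ →L[ℝ] ℝ × ℝ :=
    (ContinuousLinearMap.fst ℝ ℝ ℝ + ContinuousLinearMap.snd ℝ ℝ ℝ).prod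
      (ContinuousLinearMap.fst ℝ ℝ ℝ - ContinuousLinearMap.snd ℝ ℝ ℝ)
  have hL : ∀ p, L p = (p.1 + p.2, p.1 - p.2) := fun _ => rfl
  have hdet : L.det = -2 := by
    change LinearMap.det (L : ℝ × ℝ →ₗ[ℝ] ℝ × ℝ) = -2
    rw [← LinearMap.det_toMatrix (Module.Basis.finTwoProd ℝ), Matrix.det_fin_two]
    norm_num [LinearMap.toMatrix_apply, L]
  have hsurj : L '' univ = univ := by
    refine image_univ_of_surjective fun q => ⟨((q.1 + q.2) / 2, (q.1 - q.2) / 2), ?_⟩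
    rw [hL]; ext <;> ring
  have hinj : InjOn L univ := fun p _ q _ h => by
    rw [hL, hL, Prod.mk.injEq] at h
    ext <;> linarith [h.1, h.2]
  have hcov := integral_image_eq_integral_abs_det_fderiv_smul volume MeasurableSet.univ
    (fun p _ => L.hasFDerivAt.hasFDerivWithinAt) hinj φ
  rw [hsurj, hdet, Measure.restrict_univ] at hcov
  simp_rw [hL] at hcov
  rw [hcov, integral_smul]; norm_num [smul_smul]

lemma two_mul_exp_mul_cos_add_mul_sub (c a u v : ℝ) :
    2 * ((exp (-c * cosh (u + v)) * cos (a * (u + v))) *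
      (exp (-c * cosh (u - v)) * cos (a * (u - v)))) =
    exp (-(2 * c) * (cosh u * cosh v)) * cos (2 * a * u) +
      exp (-(2 * c) * (cosh u * cosh v)) * cos (2 * a * v) := by
  have hexp : exp (-c * cosh (u + v)) * exp (-c * cosh (u - v)) =
      exp (-(2 * c) * (cosh u * cosh v)) := by
    rw [← exp_add, cosh_add, cosh_sub]; ring_nf
  have hcos : 2 * (cos (a * (u + v)) * cos (a * (u - v))) = cos (2 * a * u) + cos (2 * a * v) := by
    rw [mul_add, mul_sub, cos_add, cos_sub, mul_assoc, mul_assoc, cos_two_mul, cos_two_mul]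
    nlinarith [sin_sq_add_cos_sq (a * u), sin_sq_add_cos_sq (a * v)]
  calc _ = (exp (-c * cosh (u + v)) * exp (-c * cosh (u - v))) *
        (2 * (cos (a * (u + v)) * cos (a * (u - v)))) := by ring
    _ = _ := by rw [hexp, hcos]; ring

lemma integral_exp_neg_mul_cosh_mul_cosh_mul_cos {c : ℝ} (hc : 0 < c) (a : ℝ) :
    ∫ p : ℝ × ℝ, exp (-c * (cosh p.1 * cosh p.2)) * cos (a * p.2) =
      4 * ∫ u in Ioi 0, Kit a (c * cosh u) := by
  have hint : Integrable fun p : ℝ × ℝ => exp (-c * (cosh p.1 * cosh p.2)) * cos (a * p.2) :=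
    (integrable_exp_neg_mul_cosh_mul_cosh hc).mul_bdd (by fun_prop)
      (ae_of_all _ fun p => abs_cos_le_one _)
  have hinner : ∀ u : ℝ, ∫ v, exp (-c * (cosh u * cosh v)) * cos (a * v) = 2 * Kit a (c * cosh u) :=
    fun u => by simp only [two_mul_Kit, neg_mul, mul_assoc]
  have heven := integral_comp_abs (f := fun u => Kit a (c * cosh u))
  simp only [cosh_abs] at heven
  rw [Measure.volume_eq_prod, integral_prod _ hint]
  simp only [hinner, integral_const_mul, heven]
  ring

lemma Kit_sq_eq_integral_Kit_cosh {x : ℝ} (hx : 0 < x) (τ : ℝ) :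
    Kit τ x ^ 2 = 2 * ∫ u in Ioi 0, Kit (2 * τ) (2 * x * cosh u) := by
  set f : ℝ → ℝ := fun t => exp (-x * cosh t) * cos (τ * t)
  set g : ℝ × ℝ → ℝ := fun p => exp (-(2 * x) * (cosh p.1 * cosh p.2)) * cos (2 * τ * p.2)
  have hg : Integrable g := (integrable_exp_neg_mul_cosh_mul_cosh (by positivity)).mul_bdd
    (by fun_prop) (ae_of_all _ fun p => abs_cos_le_one _)
  have hsq : (2 * Kit τ x) ^ 2 = ∫ p : ℝ × ℝ, f p.1 * f p.2 := by
    rw [two_mul_Kit, sq, Measure.volume_eq_prod, integral_prod_mul]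
  have hpointwise : ∀ p : ℝ × ℝ, 2 * (f (p.1 + p.2) * f (p.1 - p.2)) = g p.swap + g p := by
    rintro ⟨u, v⟩
    simp only [f, g, Prod.swap, two_mul_exp_mul_cos_add_mul_sub, mul_comm (cosh v)]
  have hg_swap : Integrable fun p : ℝ × ℝ => g p.swap := by
    rw [Measure.volume_eq_prod] at hg ⊢
    exact hg.swap
  have hswap : ∫ p : ℝ × ℝ, g p.swap = ∫ p, g p := by
    rw [Measure.volume_eq_prod, integral_prod_swap]
  have hg_integral := integral_exp_neg_mul_cosh_mul_cosh_mul_cos (by positivity : 0 < 2 * x) (2 * τ)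
  calc Kit τ x ^ 2 = (1 / 4) * ∫ p : ℝ × ℝ, 2 * (f (p.1 + p.2) * f (p.1 - p.2)) := by
        rw [integral_const_mul, integral_comp_add_sub (fun p => f p.1 * f p.2), ← hsq,
          smul_eq_mul]
        ring
    _ = (1 / 4) * ∫ p, (g p.swap + g p) := by simp only [hpointwise]
    _ = 2 * ∫ u in Ioi 0, Kit (2 * τ) (2 * x * cosh u) := by
        rw [integral_add hg_swap hg, hswap, hg_integral]
        ring

lemma cosh_image_Ioi_zero : cosh '' Ioi 0 = Ioi 1 := by
  refine Subset.antisymm ?_ fun y hy => ⟨arcosh y, arcosh_pos hy, cosh_arcosh (le_of_lt hy)⟩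
  rintro _ ⟨u, hu, rfl⟩
  exact one_lt_cosh.2 (ne_of_gt hu)

lemma integral_Ioi_comp_cosh (F : ℝ → ℝ) :
    ∫ u in Ioi 0, F (cosh u) = ∫ y in Ioi 1, F y / √(y ^ 2 - 1) := by
  rw [← cosh_image_Ioi_zero, integral_image_eq_integral_abs_deriv_smul measurableSet_Ioi
    (fun u _ => (hasDerivAt_cosh u).hasDerivWithinAt)
    (cosh_strictMonoOn.injOn.mono Ioi_subset_Ici_self)]
  refine setIntegral_congr_fun measurableSet_Ioi fun u hu => ?_
  have hsinh : 0 < sinh u := sinh_pos_iff.2 hu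
  rw [cosh_sq, add_sub_cancel_right, sqrt_sq hsinh.le, abs_of_pos hsinh, smul_eq_mul,
    mul_div_cancel₀ _ hsinh.ne']

theorem stmt7_general (x τ : ℝ) (hx : 0 < x) :
    (Kit τ x) ^ 2 = 2 * ∫ y in Set.Ioi (1:ℝ), Kit (2 * τ) (2 * x * y) / Real.sqrt (y^2 - 1) := by
  rw [Kit_sq_eq_integral_Kit_cosh hx, integral_Ioi_comp_cosh fun y => Kit (2 * τ) (2 * x * y)]

theorem stmt7 (x τ : ℝ) (hx : 0 < x) (hτ : 0 < τ) :
    (Kit τ x) ^ 2 = 2 * ∫ y in Set.Ioi (1:ℝ), Kit (2 * τ) (2 * x * y) / Real.sqrt (y^2 - 1) :=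
  stmt7_general x τ hx
end

section
/- For Re s > 0 and a ∈ [0, π/2), ∫_0^∞ cosh((π/2 + a)τ) Γ(s+iτ) Γ(s-iτ) dτ = π Γ(2s) 2^{-2s} [cos(π/4 + a/2)]^{-2s}. -/
/-!
By `Γ(u) Γ(v) = Γ(u + v) B(u, v)` and the substitution `x = sigmoid t` in the Beta integral,
`Γ(s + iτ) Γ(s - iτ) = Γ(2s) F(τ)` with `F(τ) = ∫ e^{iτx} (2 cosh (x/2))^{-2s} dx`. The kernel is
holomorphic in the strip `|Im z| < π` and decays like `e^{-Re s |Re z|}` there, so moving the line of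
integration to `Im z = b` shows that `e^{bτ} F(τ)` is the Fourier transform of
`x ↦ (2 cosh ((x + ib)/2))^{-2s}`, and that it decays exponentially when `|b| < π`. As `F` is even,
`∫_0^∞ 2 cosh (bτ) F(τ) dτ = ∫_ℝ e^{bτ} F(τ) dτ`, which Fourier inversion at `0` evaluates to
`2π (2 cos (b/2))^{-2s}`. Take `b = π/2 + a`.
-/

open Real MeasureTheory Complex
open Filter Set Topology

lemma integrable_exp_neg_mul_abs {σ : ℝ} (hσ : 0 < σ) :
    Integrable fun x : ℝ => rexp (-σ * |x|) := by
  rw [← integrableOn_univ, ← Iic_union_Ioi (a := 0), integrableOn_union]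
  constructor
  · refine (integrableOn_exp_mul_Iic hσ 0).congr_fun (fun x hx => ?_) measurableSet_Iic
    rw [abs_of_nonpos hx, mul_neg, neg_mul, neg_neg]
  · refine (integrableOn_exp_mul_Ioi (neg_neg_of_pos hσ) 0).congr_fun (fun x hx => ?_)
      measurableSet_Ioi
    rw [abs_of_pos hx]

lemma tendsto_exp_neg_mul_abs_cocompact {σ : ℝ} (hσ : 0 < σ) :
    Tendsto (fun x : ℝ => rexp (-σ * |x|)) (cocompact ℝ) (𝓝 0) :=
  tendsto_exp_atBot.comp <|
    (tendsto_norm_cocompact_atTop (E := ℝ)).const_mul_atTop_of_neg (neg_neg_of_pos hσ)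

lemma integral_Ioi_add_comp_neg {E : Type*} [NormedAddCommGroup E] [NormedSpace ℝ E]
    {f : ℝ → E} (hf : Integrable f) : ∫ τ in Ioi 0, (f τ + f (-τ)) = ∫ τ, f τ := by
  rw [integral_add hf.integrableOn hf.comp_neg.integrableOn, integral_comp_neg_Ioi, neg_zero,
    add_comm, intervalIntegral.integral_Iic_add_Ioi hf.integrableOn hf.integrableOn]

lemma Complex.re_cosh (z : ℂ) : (Complex.cosh z).re = Real.cosh z.re * Real.cos z.im := by
  conv_lhs => rw [← re_add_im z]
  rw [Complex.cosh_add, cosh_mul_I, sinh_mul_I]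
  simp [← ofReal_cosh, ← ofReal_sinh, ← ofReal_cos, ← ofReal_sin]

lemma Real.exp_abs_le_two_mul_cosh (x : ℝ) : rexp |x| ≤ 2 * Real.cosh x := by
  rw [← Real.cosh_abs, Real.cosh_eq]
  linarith [exp_pos (-|x|)]

lemma Complex.norm_cpow_le_of_re_nonneg {w : ℂ} (hw : 0 ≤ w.re) (z : ℂ) :
    ‖w ^ z‖ ≤ ‖w‖ ^ z.re * rexp (π / 2 * |z.im|) := by
  refine (norm_cpow_le w z).trans ?_
  rw [div_eq_mul_inv, ← Real.exp_neg]
  gcongr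
  calc -(arg w * z.im) ≤ |arg w| * |z.im| := by rw [← abs_mul]; exact neg_le_abs _
    _ ≤ π / 2 * |z.im| := by gcongr; exact abs_arg_le_pi_div_two_iff.mpr hw

lemma Real.sigmoid_eq_exp_div_two_mul_cosh (t : ℝ) :
    sigmoid t = rexp (t / 2) / (2 * Real.cosh (t / 2)) := by
  rw [sigmoid_def, Real.cosh_eq, mul_div_cancel₀ _ two_ne_zero]
  have : rexp (-t) = rexp (-(t / 2)) / rexp (t / 2) := by rw [← Real.exp_sub]; ring_nf
  rw [this]
  field_simp

lemma Complex.ofReal_exp_cpow (a : ℝ) (w : ℂ) : ((rexp a : ℝ) : ℂ) ^ w = cexp (a * w) := by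
  rw [cpow_def_of_ne_zero (by exact_mod_cast (exp_pos a).ne'), ← ofReal_log (exp_pos a).le,
    Real.log_exp]

section ContourShift

variable {E : Type*} [NormedAddCommGroup E] [NormedSpace ℂ E]

lemma tendsto_integral_vertical_cocompact {f : ℂ → E} {c : ℝ} {B : ℝ → ℝ}
    (hB : ∀ x y : ℝ, y ∈ uIcc 0 c → ‖f (x + y * I)‖ ≤ B x)
    (hB0 : Tendsto B (cocompact ℝ) (𝓝 0)) :
    Tendsto (fun x : ℝ => ∫ y in (0 : ℝ)..c, f (x + y * I)) (cocompact ℝ) (𝓝 0) := by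
  refine squeeze_zero_norm (fun x => ?_) (by simpa using hB0.mul_const |c - 0|)
  simpa using intervalIntegral.norm_integral_le_of_norm_le_const fun y hy =>
    hB x y (uIoc_subset_uIcc hy)

theorem integral_add_mul_I_eq_integral [CompleteSpace E] (f : ℂ → E) (c : ℝ)
    (hf : ∀ z : ℂ, z.im ∈ uIcc 0 c → DifferentiableAt ℂ f z) (B : ℝ → ℝ)
    (hB : ∀ x y : ℝ, y ∈ uIcc 0 c → ‖f (x + y * I)‖ ≤ B x)
    (hB0 : Tendsto B (cocompact ℝ) (𝓝 0))
    (h0 : Integrable fun x : ℝ => f x) (hc : Integrable fun x : ℝ => f (x + c * I)) :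
    ∫ x : ℝ, f (x + c * I) = ∫ x : ℝ, f x := by
  have hrect : ∀ T : ℝ, ((∫ x in -T..T, f x) - ∫ x in -T..T, f (x + c * I)) +
      I • (∫ y in (0 : ℝ)..c, f (T + y * I)) - I • (∫ y in (0 : ℝ)..c, f (-T + y * I)) = 0 :=
    fun T => by
      simpa using integral_boundary_rect_eq_zero_of_differentiableOn f (-T : ℝ) (T + c * I)
        fun z hz => (hf z (by simpa using hz.2)).differentiableWithinAt
  have hV := tendsto_integral_vertical_cocompact hB hB0
  have hlim := (((intervalIntegral_tendsto_integral h0 tendsto_neg_atTop_atBot tendsto_id).sub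
    (intervalIntegral_tendsto_integral hc tendsto_neg_atTop_atBot tendsto_id)).add
    ((hV.comp atTop_le_cocompact).const_smul I)).sub
    ((hV.comp (tendsto_neg_atTop_atBot.trans atBot_le_cocompact)).const_smul I)
  simp only [smul_zero, add_zero, sub_zero] at hlim
  refine (sub_eq_zero.mp (tendsto_nhds_unique (hlim.congr fun T => ?_) tendsto_const_nhds)).symm
  simpa using hrect T

end ContourShift

section FourierInversion

open FourierTransform

lemma integral_exp_mul_I_mul_eq_fourier (h : ℝ → ℂ) (τ : ℝ) :
    ∫ x : ℝ, cexp (I * τ * x) * h x = 𝓕 h (-(τ / (2 * π))) := by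
  rw [Real.fourier_real_eq_integral_exp_smul]
  congr 1 with x
  rw [smul_eq_mul]
  congr 2
  push_cast
  field_simp

lemma continuous_integral_exp_mul_I_mul {h : ℝ → ℂ} (hh : Integrable h) :
    Continuous fun τ : ℝ => ∫ x : ℝ, cexp (I * τ * x) * h x := by
  simp only [integral_exp_mul_I_mul_eq_fourier]
  exact (VectorFourier.fourierIntegral_continuous Real.continuous_fourierChar continuous_inner
    hh).comp (continuous_id.div_const _).neg

theorem integral_integral_exp_mul_I_mul {h : ℝ → ℂ} (hh : Integrable h) (h0 : ContinuousAt h 0)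
    (hF : Integrable fun τ : ℝ => ∫ x : ℝ, cexp (I * τ * x) * h x) :
    ∫ τ : ℝ, ∫ x : ℝ, cexp (I * τ * x) * h x = 2 * π * h 0 := by
  have hFh : (fun τ : ℝ => ∫ x : ℝ, cexp (I * τ * x) * h x) =
      fun τ => 𝓕 h (-(2 * π)⁻¹ * τ) := by
    ext τ
    rw [integral_exp_mul_I_mul_eq_fourier]
    ring_nf
  have hint : Integrable (𝓕 h) := by
    have := hF.comp_mul_left' (R := -(2 * π)) (by simp [pi_ne_zero])
    refine this.congr (Eventually.of_forall fun w => ?_)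
    simp only [integral_exp_mul_I_mul_eq_fourier]
    field_simp
  rw [hFh, Measure.integral_comp_mul_left, ← hh.fourierInv_fourier_eq hint h0, Real.fourierInv_eq]
  simp [pi_nonneg]

end FourierInversion

noncomputable def sechKernel (s z : ℂ) : ℂ := (2 * Complex.cosh (z / 2)) ^ (-(2 * s))

section SechKernel

variable {s : ℂ}

lemma re_two_mul_cosh_half (z : ℂ) :
    (2 * Complex.cosh (z / 2)).re = 2 * Real.cosh (z.re / 2) * Real.cos (z.im / 2) := by
  simp [Complex.re_cosh, mul_assoc]

lemma re_two_mul_cosh_half_pos {z : ℂ} (hz : |z.im| < π) : 0 < (2 * Complex.cosh (z / 2)).re := by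
  rw [re_two_mul_cosh_half]
  have := Real.cos_pos_of_mem_Ioo (x := z.im / 2) ⟨by linarith [neg_abs_le z.im],
    by linarith [le_abs_self z.im]⟩
  positivity

lemma differentiableAt_sechKernel {z : ℂ} (hz : |z.im| < π) :
    DifferentiableAt ℂ (sechKernel s) z :=
  ((differentiableAt_id.div_const 2).ccosh.const_mul 2).cpow_const
    (mem_slitPlane_iff.mpr (Or.inl (re_two_mul_cosh_half_pos hz)))

lemma sechKernel_neg (z : ℂ) : sechKernel s (-z) = sechKernel s z := by
  rw [sechKernel, sechKernel, neg_div, Complex.cosh_neg]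

lemma continuous_sechKernel_line {c : ℝ} (hc : |c| < π) :
    Continuous fun x : ℝ => sechKernel s (x + c * I) :=
  continuous_iff_continuousAt.mpr fun x =>
    (differentiableAt_sechKernel (by simpa using hc)).continuousAt.comp
      (continuous_ofReal.add continuous_const).continuousAt

lemma exists_norm_sechKernel_le (hs : 0 ≤ s.re) {c : ℝ} (hc : c < π) :
    ∃ K, ∀ x y : ℝ, |y| ≤ c → ‖sechKernel s (x + y * I)‖ ≤ K * rexp (-s.re * |x|) := by
  refine ⟨rexp (π * |s.im|) * Real.cos (c / 2) ^ (-(2 * s.re)), fun x y hy => ?_⟩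
  set w := 2 * Complex.cosh ((x + y * I) / 2)
  have hre : w.re = 2 * Real.cosh (x / 2) * Real.cos (y / 2) := by
    simp only [w]
    rw [re_two_mul_cosh_half]
    simp
  have hcos_pos : 0 < Real.cos (c / 2) :=
    Real.cos_pos_of_mem_Ioo ⟨by linarith [abs_nonneg y, pi_pos], by linarith⟩
  have hcos : Real.cos (c / 2) ≤ Real.cos (y / 2) := by
    rw [← Real.cos_abs (y / 2), abs_div, abs_two]
    exact Real.cos_le_cos_of_nonneg_of_le_pi (by positivity) (by linarith [pi_pos]) (by linarith)
  have hlow : Real.cos (c / 2) * rexp (|x| / 2) ≤ ‖w‖ := by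
    have h2cosh : rexp (|x| / 2) ≤ 2 * Real.cosh (x / 2) := by
      simpa [abs_div] using Real.exp_abs_le_two_mul_cosh (x / 2)
    calc Real.cos (c / 2) * rexp (|x| / 2) ≤ Real.cos (y / 2) * (2 * Real.cosh (x / 2)) := by
          gcongr; exact hcos_pos.le.trans hcos
      _ = w.re := by rw [hre]; ring
      _ ≤ ‖w‖ := re_le_norm w
  have hw : 0 ≤ w.re := hre ▸ by have := hcos_pos.trans_le hcos; positivity
  calc ‖sechKernel s (x + y * I)‖ ≤ ‖w‖ ^ (-(2 * s)).re * rexp (π / 2 * |(-(2 * s)).im|) :=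
        norm_cpow_le_of_re_nonneg hw _
    _ = ‖w‖ ^ (-(2 * s.re)) * rexp (π * |s.im|) := by
        rw [show (-(2 * s)).re = -(2 * s.re) by simp,
          show |(-(2 * s)).im| = 2 * |s.im| by simp [abs_mul]]
        ring_nf
    _ ≤ (Real.cos (c / 2) * rexp (|x| / 2)) ^ (-(2 * s.re)) * rexp (π * |s.im|) := by
        gcongr ?_ * _
        exact Real.rpow_le_rpow_of_nonpos (mul_pos hcos_pos (exp_pos _)) hlow (by linarith)
    _ = _ := by
        rw [Real.mul_rpow hcos_pos.le (exp_pos _).le, ← Real.exp_mul]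
        ring_nf

lemma sechKernel_ofReal_mul_I (s : ℂ) {b : ℝ} (hb : |b| ≤ π) :
    sechKernel s (b * I) = 2 ^ (-(2 * s)) * (Real.cos (b / 2) : ℂ) ^ (-(2 * s)) := by
  have hcos : 0 ≤ Real.cos (b / 2) := Real.cos_nonneg_of_mem_Icc
    ⟨by linarith [neg_abs_le b], by linarith [le_abs_self b]⟩
  rw [sechKernel, show (b * I : ℂ) / 2 = ((b / 2 : ℝ) : ℂ) * I by push_cast; ring, cosh_mul_I,
    ← ofReal_cos, ← ofReal_ofNat, mul_cpow_ofReal_nonneg zero_le_two hcos]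

end SechKernel

lemma betaIntegral_eq_integral_sigmoid_cpow (u v : ℂ) :
    betaIntegral u v = ∫ t : ℝ, (sigmoid t : ℂ) ^ u * (sigmoid (-t) : ℂ) ^ v := by
  have key := integral_image_eq_integral_abs_deriv_smul MeasurableSet.univ
    (fun t _ => (hasDerivAt_sigmoid t).hasDerivWithinAt) sigmoid_injective.injOn
    (fun x : ℝ => (x : ℂ) ^ (u - 1) * (1 - (x : ℂ)) ^ (v - 1))
  rw [image_univ, Real.range_sigmoid, setIntegral_univ] at key
  rw [betaIntegral, intervalIntegral.integral_of_le zero_le_one, integral_Ioc_eq_integral_Ioo, key]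
  congr 1 with t
  have h0 : (sigmoid t : ℂ) ≠ 0 := by exact_mod_cast (sigmoid_pos t).ne'
  have h1 : (1 - sigmoid t : ℂ) ≠ 0 := by exact_mod_cast (sub_pos.mpr (sigmoid_lt_one t)).ne'
  rw [sigmoid_neg, abs_of_pos (mul_pos (sigmoid_pos t) (sub_pos.mpr (sigmoid_lt_one t))),
    real_smul, cpow_sub _ _ h0, cpow_sub _ _ h1, cpow_one, cpow_one]
  push_cast
  field_simp

lemma sigmoid_cpow_mul_sigmoid_neg_cpow (s : ℂ) (τ t : ℝ) :
    (sigmoid t : ℂ) ^ (s + I * τ) * (sigmoid (-t) : ℂ) ^ (s - I * τ) =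
      cexp (I * τ * t) * sechKernel s t := by
  have hpos : ∀ t' : ℝ, 0 < 2 * Real.cosh (t' / 2) := fun t' => by positivity
  have hσ : ∀ t' : ℝ, sigmoid t' = rexp (t' / 2 - Real.log (2 * Real.cosh (t' / 2))) := fun t' => by
    rw [sigmoid_eq_exp_div_two_mul_cosh, Real.exp_sub, exp_log (hpos t')]
  have hcosh : 2 * Complex.cosh (t / 2) = ((rexp (Real.log (2 * Real.cosh (t / 2))) : ℝ) : ℂ) := by
    rw [exp_log (hpos t)]; norm_num
  rw [hσ t, hσ (-t), neg_div, Real.cosh_neg, sechKernel, hcosh, ofReal_exp_cpow, ofReal_exp_cpow,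
    ofReal_exp_cpow, ← Complex.exp_add, ← Complex.exp_add]
  congr 1
  push_cast
  ring

noncomputable def sechFourier (s : ℂ) (c τ : ℝ) : ℂ :=
  ∫ x : ℝ, cexp (I * τ * x) * sechKernel s (x + c * I)

section SechFourier

variable {s : ℂ}

lemma exists_norm_exp_mul_sechKernel_le (hs : 0 ≤ s.re) (τ : ℝ) {c : ℝ} (hc : c < π) :
    ∃ K, ∀ x y : ℝ, |y| ≤ c →
      ‖cexp (I * τ * (x + y * I)) * sechKernel s (x + y * I)‖ ≤ K * rexp (-s.re * |x|) := by
  obtain ⟨K, hK⟩ := exists_norm_sechKernel_le hs hc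
  refine ⟨rexp (|τ| * c) * K, fun x y hy => ?_⟩
  have hexp : ‖cexp (I * τ * (x + y * I))‖ ≤ rexp (|τ| * c) := by
    rw [norm_exp, exp_le_exp]
    calc (I * τ * (x + y * I)).re = -(τ * y) := by simp
      _ ≤ |τ| * |y| := by rw [← abs_mul]; exact neg_le_abs _
      _ ≤ |τ| * c := by gcongr
  rw [norm_mul, mul_assoc (rexp _)]
  exact mul_le_mul hexp (hK x y hy) (norm_nonneg _) (exp_pos _).le

lemma integrable_exp_mul_sechKernel_line (hs : 0 < s.re) (τ : ℝ) {c : ℝ} (hc : |c| < π) :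
    Integrable fun x : ℝ => cexp (I * τ * (x + c * I)) * sechKernel s (x + c * I) := by
  obtain ⟨K, hK⟩ := exists_norm_exp_mul_sechKernel_le hs.le τ hc
  refine ((integrable_exp_neg_mul_abs hs).const_mul K).mono' ?_
    (Eventually.of_forall fun x => hK x c le_rfl)
  exact (by fun_prop : Continuous fun x : ℝ => cexp (I * τ * (x + c * I))).mul
    (continuous_sechKernel_line hc) |>.aestronglyMeasurable

lemma integrable_sechKernel_line (hs : 0 < s.re) {c : ℝ} (hc : |c| < π) :
    Integrable fun x : ℝ => sechKernel s (x + c * I) := by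
  simpa using integrable_exp_mul_sechKernel_line hs 0 hc

lemma sechFourier_eq_exp_mul_integral (c τ : ℝ) :
    sechFourier s c τ = cexp (c * τ) * ∫ x : ℝ, cexp (I * τ * (x + c * I)) * sechKernel s (x + c * I) := by
  rw [sechFourier, ← integral_const_mul]
  congr 1 with x
  rw [← mul_assoc, ← Complex.exp_add]
  congr 2
  linear_combination (-(c * τ) : ℂ) * I_sq

lemma sechFourier_eq_exp_mul_sechFourier_zero (hs : 0 < s.re) {c : ℝ} (hc : |c| < π) (τ : ℝ) :
    sechFourier s c τ = cexp (c * τ) * sechFourier s 0 τ := by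
  obtain ⟨K, hK⟩ := exists_norm_exp_mul_sechKernel_le hs.le τ hc
  have hline : ∀ y : ℝ, y ∈ uIcc 0 c → |y| ≤ |c| := fun y hy => by
    simpa using abs_sub_left_of_mem_uIcc hy
  have hshift := integral_add_mul_I_eq_integral (fun z => cexp (I * τ * z) * sechKernel s z) c
    (fun z hz => (by fun_prop : DifferentiableAt ℂ (fun z => cexp (I * τ * z)) z).mul
      (differentiableAt_sechKernel ((hline _ hz).trans_lt hc)))
    (fun x => K * rexp (-s.re * |x|)) (fun x y hy => hK x y (hline y hy))
    (by simpa using (tendsto_exp_neg_mul_abs_cocompact hs).const_mul K)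
    (by simpa using integrable_exp_mul_sechKernel_line hs τ (c := 0) (by simp [pi_pos]))
    (integrable_exp_mul_sechKernel_line hs τ hc)
  rw [sechFourier_eq_exp_mul_integral, hshift, sechFourier]
  simp

lemma sechFourier_zero_neg (τ : ℝ) : sechFourier s 0 (-τ) = sechFourier s 0 τ := by
  rw [sechFourier, ← integral_neg_eq_self]
  congr 1 with x
  rw [← sechKernel_neg]
  push_cast
  ring_nf

lemma sechFourier_add_sechFourier_neg (hs : 0 < s.re) {b : ℝ} (hb : |b| < π) (τ : ℝ) :
    sechFourier s b τ + sechFourier s b (-τ) = 2 * Real.cosh (b * τ) * sechFourier s 0 τ := by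
  rw [sechFourier_eq_exp_mul_sechFourier_zero hs hb, sechFourier_eq_exp_mul_sechFourier_zero hs hb,
    sechFourier_zero_neg, ofReal_cosh, two_cosh]
  push_cast
  ring_nf

lemma norm_sechFourier_le (c τ : ℝ) :
    ‖sechFourier s c τ‖ ≤ ∫ x : ℝ, ‖sechKernel s (x + c * I)‖ := by
  refine (norm_integral_le_integral_norm _).trans_eq (congr_arg _ (funext fun x => ?_))
  simp [norm_exp]

lemma sechFourier_eq_exp_mul_sechFourier (hs : 0 < s.re) {b c : ℝ} (hb : |b| < π)
    (hc : |c| < π) (τ : ℝ) : sechFourier s b τ = cexp ((b - c) * τ) * sechFourier s c τ := by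
  rw [sechFourier_eq_exp_mul_sechFourier_zero hs hb, sechFourier_eq_exp_mul_sechFourier_zero hs hc,
    ← mul_assoc, ← Complex.exp_add]
  ring_nf

/-- Shift to the line `Im z = (|b| + π) / 2` for `τ ≥ 0` and to `Im z = -(|b| + π) / 2` for
`τ < 0`. -/
lemma exists_norm_sechFourier_le (hs : 0 < s.re) {b : ℝ} (hb : |b| < π) :
    ∃ C, ∀ τ, ‖sechFourier s b τ‖ ≤ C * rexp (-((π - |b|) / 2) * |τ|) := by
  set c := (|b| + π) / 2 with hc_def
  have hc : |c| < π := by rw [abs_of_pos (by positivity)]; linarith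
  have hc' : |-c| < π := by rwa [abs_neg]
  set M := fun c : ℝ => ∫ x : ℝ, ‖sechKernel s (x + c * I)‖
  have hM : ∀ c, 0 ≤ M c := fun c => integral_nonneg fun _ => norm_nonneg _
  have key : ∀ c', |c'| < π → ∀ τ, ‖sechFourier s b τ‖ ≤ rexp ((b - c') * τ) * M c' :=
    fun c' hc' τ => by
      rw [sechFourier_eq_exp_mul_sechFourier hs hb hc' τ, norm_mul, ← ofReal_sub, ← ofReal_mul,
        norm_exp_ofReal]
      exact mul_le_mul_of_nonneg_left (norm_sechFourier_le c' τ) (exp_pos _).le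
  refine ⟨M c + M (-c), fun τ => ?_⟩
  rw [mul_comm]
  rcases le_or_gt 0 τ with hτ | hτ
  · calc _ ≤ rexp ((b - c) * τ) * M c := key c hc τ
      _ ≤ _ := by
        gcongr rexp ?_ * ?_
        · rw [abs_of_nonneg hτ]; nlinarith [le_abs_self b]
        · linarith [hM (-c)]
  · calc _ ≤ rexp ((b - -c) * τ) * M (-c) := key (-c) hc' τ
      _ ≤ _ := by
        gcongr rexp ?_ * ?_
        · rw [abs_of_neg hτ]; nlinarith [neg_abs_le b]
        · linarith [hM c]

lemma integrable_sechFourier (hs : 0 < s.re) {b : ℝ} (hb : |b| < π) :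
    Integrable (sechFourier s b) := by
  obtain ⟨C, hC⟩ := exists_norm_sechFourier_le hs hb
  exact ((integrable_exp_neg_mul_abs (by linarith)).const_mul C).mono'
    (continuous_integral_exp_mul_I_mul (integrable_sechKernel_line hs hb)).aestronglyMeasurable
    (Eventually.of_forall hC)

lemma integral_sechFourier (hs : 0 < s.re) {b : ℝ} (hb : |b| < π) :
    ∫ τ, sechFourier s b τ = 2 * π * sechKernel s (b * I) := by
  simpa [sechFourier] using integral_integral_exp_mul_I_mul (integrable_sechKernel_line hs hb)
    (continuous_sechKernel_line hb).continuousAt (integrable_sechFourier hs hb)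

end SechFourier

lemma Gamma_mul_Gamma_eq_Gamma_mul_sechFourier {s : ℂ} (hs : 0 < s.re) (τ : ℝ) :
    Gamma (s + I * τ) * Gamma (s - I * τ) = Gamma (2 * s) * sechFourier s 0 τ := by
  rw [Gamma_mul_Gamma_eq_betaIntegral (by simpa using hs) (by simpa using hs),
    betaIntegral_eq_integral_sigmoid_cpow, sechFourier, add_add_sub_cancel, two_mul]
  simp [sigmoid_cpow_mul_sigmoid_neg_cpow]

theorem stmt15 (s : ℂ) (hs : 0 < s.re) (a : ℝ) (ha : a ∈ Set.Ico 0 (Real.pi / 2)) :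
    ∫ τ in Set.Ioi (0:ℝ), (Real.cosh ((Real.pi / 2 + a) * τ) : ℂ) *
        Complex.Gamma (s + Complex.I * (τ : ℂ)) * Complex.Gamma (s - Complex.I * (τ : ℂ)) =
      (Real.pi : ℂ) * Complex.Gamma (2 * s) * (2 : ℂ) ^ (-(2 * s)) *
        ((Real.cos (Real.pi / 4 + a / 2) : ℂ)) ^ (-(2 * s)) := by
  obtain ⟨ha0, haπ⟩ := ha
  set b := π / 2 + a with hb_def
  have hb : |b| < π := by rw [abs_of_nonneg (by positivity)]; linarith
  have hpt : ∀ τ : ℝ, (Real.cosh (b * τ) : ℂ) * Gamma (s + I * τ) * Gamma (s - I * τ) =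
      Gamma (2 * s) / 2 * (sechFourier s b τ + sechFourier s b (-τ)) := fun τ => by
    rw [mul_assoc, Gamma_mul_Gamma_eq_Gamma_mul_sechFourier hs, sechFourier_add_sechFourier_neg hs hb]
    ring
  simp_rw [hpt]
  rw [integral_const_mul, integral_Ioi_add_comp_neg (integrable_sechFourier hs hb),
    integral_sechFourier hs hb, sechKernel_ofReal_mul_I s hb.le,
    show b / 2 = π / 4 + a / 2 by rw [hb_def]; ring]
  ring
end

section
/- For all x > 0, τ > 0 and δ ∈ [0, π/2), |K_{iτ}(x)| ≤ e^{-δτ} K_0(x cos δ). -/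
open Real MeasureTheory

/-- Macdonald function of order 0. -/
noncomputable def K0 (u : ℝ) : ℝ :=
  ∫ t in Set.Ioi (0:ℝ), Real.exp (-u * Real.cosh t)

/-!
`Kit τ x` is the real part of `∫₀^∞ f`, where `f z = exp (i τ z - x cosh z)` is entire.
Cauchy's theorem on the rectangles `[0, R] × [0, δ]` moves the contour to the line `ℑ z = δ`:
the right side vanishes as `R → ∞` because `|f (R + i s)| ≤ e^{|τ| δ} e^{-x cos δ cosh R}`,
and the left side `∫₀^δ f (i s) ds` is real, so it does not change the real part.
On the shifted line `|f (t + i δ)| = e^{-τ δ} e^{-x cos δ cosh t}`, which integrates to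
`e^{-δ τ} K0 (x cos δ)`.
-/

open Filter Set Topology
open Complex (I)

theorem Real.self_le_cosh (t : ℝ) : t ≤ cosh t := by
  rcases le_or_gt 0 t with ht | ht
  · exact (self_le_sinh_iff.2 ht).trans (sinh_lt_cosh t).le
  · linarith [cosh_pos t]

section ContourShift

variable {f : ℂ → ℂ} {δ : ℝ}

theorem integral_Ioi_sub_integral_Ioi_add_mul_I (hf : Differentiable ℂ f)
    (h₀ : IntegrableOn (fun t : ℝ => f t) (Ioi 0))
    (hδ : IntegrableOn (fun t : ℝ => f (t + δ * I)) (Ioi 0))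
    (hvert : Tendsto (fun R : ℝ => ∫ s in (0:ℝ)..δ, f (R + s * I)) atTop (𝓝 0)) :
    (∫ t in Ioi (0:ℝ), f t) - ∫ t in Ioi (0:ℝ), f (t + δ * I) =
      I • ∫ s in (0:ℝ)..δ, f (s * I) := by
  have hrect : ∀ R : ℝ, (∫ t in (0:ℝ)..R, f t) - (∫ t in (0:ℝ)..R, f (t + δ * I)) =
      I • (∫ s in (0:ℝ)..δ, f (s * I)) - I • ∫ s in (0:ℝ)..δ, f (R + s * I) := by
    intro R
    have := Complex.integral_boundary_rect_eq_zero_of_differentiableOn f 0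
      (R + δ * I) hf.differentiableOn
    simp only [Complex.zero_re, Complex.zero_im, Complex.add_re, Complex.add_im,
      Complex.ofReal_re, Complex.ofReal_im, Complex.mul_re, Complex.mul_im, Complex.I_re,
      Complex.I_im, Complex.ofReal_zero, zero_add, mul_zero, mul_one, sub_zero, zero_mul,
      add_zero] at this
    linear_combination this
  have hlim := ((intervalIntegral_tendsto_integral_Ioi 0 h₀ tendsto_id).sub
    (intervalIntegral_tendsto_integral_Ioi 0 hδ tendsto_id))
  simp_rw [hrect] at hlim
  refine tendsto_nhds_unique hlim ?_
  simpa using (hvert.const_smul I).const_sub (I • ∫ s in (0:ℝ)..δ, f (s * I))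

end ContourShift

noncomputable def macdonaldIntegrand (τ x : ℝ) (z : ℂ) : ℂ :=
  Complex.exp (τ * z * I - x * Complex.cosh z)

namespace macdonaldIntegrand

variable {τ x : ℝ}

theorem differentiable : Differentiable ℂ (macdonaldIntegrand τ x) :=
  Complex.differentiable_exp.comp <| ((differentiable_id.const_mul _).mul_const _).sub
    (Complex.differentiable_cosh.const_mul _)

theorem norm_add_mul_I (t s : ℝ) :
    ‖macdonaldIntegrand τ x (t + s * I)‖ = exp (-(τ * s) - x * (cosh t * cos s)) := by
  have hcosh : Complex.cosh (t + s * I) =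
      (cosh t * cos s : ℝ) + (sinh t * sin s : ℝ) * I := by
    rw [Complex.cosh_add, Complex.cosh_mul_I, Complex.sinh_mul_I]
    push_cast
    ring
  rw [macdonaldIntegrand, Complex.norm_exp, hcosh]
  simp only [Complex.sub_re, Complex.add_re, Complex.mul_re, Complex.add_im, Complex.mul_im,
    Complex.I_re, Complex.I_im, Complex.ofReal_re, Complex.ofReal_im]
  ring_nf

theorem re_ofReal (t : ℝ) :
    (macdonaldIntegrand τ x t).re = exp (-x * cosh t) * cos (τ * t) := by
  have : τ * t * I - x * Complex.cosh t = (-x * cosh t : ℝ) + (τ * t : ℝ) * I := by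
    push_cast
    ring
  rw [macdonaldIntegrand, this, Complex.exp_re]
  simp

theorem mul_I (s : ℝ) :
    macdonaldIntegrand τ x (s * I) = (exp (-(τ * s) - x * cos s) : ℝ) := by
  have : τ * (s * I) * I - x * Complex.cos s = (-(τ * s) - x * cos s : ℝ) := by
    push_cast
    ring_nf
    simp
  rw [macdonaldIntegrand, Complex.cosh_mul_I, this, Complex.ofReal_exp]

theorem integrableOn_Ioi_add_mul_I {s : ℝ} (hxs : 0 < x * cos s) :
    IntegrableOn (fun t : ℝ => macdonaldIntegrand τ x (t + s * I)) (Ioi 0) := by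
  refine Integrable.mono' ((exp_neg_integrableOn_Ioi 0 hxs).const_mul (exp (-(τ * s))))
    (differentiable.continuous.comp (by fun_prop)).aestronglyMeasurable ?_
  filter_upwards [ae_restrict_mem measurableSet_Ioi] with t ht
  rw [norm_add_mul_I, sub_eq_add_neg, exp_add]
  gcongr
  nlinarith [self_le_cosh t]

theorem integrableOn_Ioi_ofReal (hx : 0 < x) :
    IntegrableOn (fun t : ℝ => macdonaldIntegrand τ x t) (Ioi 0) := by
  simpa using integrableOn_Ioi_add_mul_I (τ := τ) (s := 0) (by simpa using hx)

theorem tendsto_intervalIntegral_add_mul_I_atTop (hx : 0 < x) {δ : ℝ} (hδ₀ : 0 ≤ δ)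
    (hδ : δ < π / 2) :
    Tendsto (fun R : ℝ => ∫ s in (0:ℝ)..δ, macdonaldIntegrand τ x (R + s * I))
      atTop (𝓝 0) := by
  set c := x * cos δ
  have hc : 0 < c := mul_pos hx (cos_pos_of_mem_Ioo ⟨by linarith [pi_pos], hδ⟩)
  have hbound : ∀ R : ℝ, ∀ s ∈ uIoc 0 δ, ‖macdonaldIntegrand τ x (R + s * I)‖ ≤
      exp (|τ| * δ) * exp (-(c * cosh R)) := by
    intro R s hs
    rw [uIoc_of_le hδ₀] at hs
    have hcos : cos δ ≤ cos s := cos_le_cos_of_nonneg_of_le_pi hs.1.le (by linarith) hs.2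
    rw [norm_add_mul_I, sub_eq_add_neg, exp_add]
    refine mul_le_mul (exp_le_exp.2 ?_) (exp_le_exp.2 ?_) (exp_pos _).le (exp_pos _).le
    · nlinarith [neg_abs_le τ, abs_nonneg τ, hs.1, hs.2]
    · nlinarith [mul_le_mul_of_nonneg_left hcos (mul_pos hx (cosh_pos R)).le]
  have hdecay :
      Tendsto (fun R => exp (|τ| * δ) * exp (-(c * cosh R)) * |δ - 0|) atTop (𝓝 0) := by
    have : Tendsto (fun R => c * cosh R) atTop atTop :=
      (tendsto_atTop_mono self_le_cosh tendsto_id).const_mul_atTop hc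
    simpa using ((tendsto_exp_atBot.comp (tendsto_neg_atTop_atBot.comp this)).const_mul
      (exp (|τ| * δ))).mul_const |δ - 0|
  exact squeeze_zero_norm
    (fun R => intervalIntegral.norm_integral_le_of_norm_le_const (hbound R)) hdecay

theorem re_integral_Ioi_eq_re_integral_Ioi_add_mul_I (hx : 0 < x) {δ : ℝ} (hδ₀ : 0 ≤ δ)
    (hδ : δ < π / 2) :
    (∫ t in Ioi (0:ℝ), macdonaldIntegrand τ x t).re =
      (∫ t in Ioi (0:ℝ), macdonaldIntegrand τ x (t + δ * I)).re := by
  have hshift := integral_Ioi_sub_integral_Ioi_add_mul_I (differentiable (τ := τ))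
    (integrableOn_Ioi_ofReal hx)
    (integrableOn_Ioi_add_mul_I (mul_pos hx (cos_pos_of_mem_Ioo ⟨by linarith [pi_pos], hδ⟩)))
    (tendsto_intervalIntegral_add_mul_I_atTop hx hδ₀ hδ)
  have hreal : (∫ s in (0:ℝ)..δ, macdonaldIntegrand τ x (s * I)) =
      ((∫ s in (0:ℝ)..δ, exp (-(τ * s) - x * cos s) : ℝ) : ℂ) := by
    simp_rw [mul_I]
    exact intervalIntegral.integral_ofReal
  rw [hreal, sub_eq_iff_eq_add'] at hshift
  simp [hshift]

theorem integral_norm_add_mul_I (δ : ℝ) :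
    ∫ t in Ioi (0:ℝ), ‖macdonaldIntegrand τ x (t + δ * I)‖ =
      exp (-δ * τ) * K0 (x * cos δ) := by
  rw [K0, ← integral_const_mul]
  refine setIntegral_congr_fun measurableSet_Ioi fun t _ => ?_
  rw [norm_add_mul_I, ← exp_add]
  ring_nf

end macdonaldIntegrand

theorem Kit_eq_re_integral_macdonaldIntegrand {τ x : ℝ} (hx : 0 < x) :
    Kit τ x = (∫ t in Ioi (0:ℝ), macdonaldIntegrand τ x t).re := by
  rw [← RCLike.re_to_complex, ← integral_re (macdonaldIntegrand.integrableOn_Ioi_ofReal hx),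
    Kit]
  simp_rw [RCLike.re_to_complex, macdonaldIntegrand.re_ofReal]

theorem stmt18_general (x τ δ : ℝ) (hx : 0 < x) (hδ : δ ∈ Set.Ico 0 (Real.pi / 2)) :
    |Kit τ x| ≤ Real.exp (-δ * τ) * K0 (x * Real.cos δ) := by
  calc |Kit τ x|
      = |(∫ t in Ioi (0:ℝ), macdonaldIntegrand τ x (t + δ * I)).re| := by
        rw [Kit_eq_re_integral_macdonaldIntegrand hx,
          macdonaldIntegrand.re_integral_Ioi_eq_re_integral_Ioi_add_mul_I hx hδ.1 hδ.2]
    _ ≤ ‖∫ t in Ioi (0:ℝ), macdonaldIntegrand τ x (t + δ * I)‖ :=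
        Complex.abs_re_le_norm _
    _ ≤ ∫ t in Ioi (0:ℝ), ‖macdonaldIntegrand τ x (t + δ * I)‖ :=
        norm_integral_le_integral_norm _
    _ = Real.exp (-δ * τ) * K0 (x * Real.cos δ) := macdonaldIntegrand.integral_norm_add_mul_I δ

theorem stmt18 (x τ δ : ℝ) (hx : 0 < x) (hτ : 0 < τ) (hδ : δ ∈ Set.Ico 0 (Real.pi / 2)) :
    |Kit τ x| ≤ Real.exp (-δ * τ) * K0 (x * Real.cos δ) :=
  stmt18_general x τ δ hx hδ
end
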